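/- arXiv:1303.4669 — 3 statements merged into one kernel-verified Lean document; each statement's English description precedes it below -/
import Mathlib

section
/- A simplicial set X is isomorphic to the nerve of some category if and only if for every n the canonical spine map X_n → X_1 ×_{X_0} X_1 ×_{X_0} ⋯ ×_{X_0} X_1 (sending an n-simplex to the path of its n consecutive edges between vertices 0,1,…,n) is a bijection. -/
/-!
The nerve of a category satisfies the strict Segal condition, and the condition is invariant
under isomorphism.

Conversely, if every spine map of `X` is bijective, a `2`-simplex is determined by its edges
`0 → 1` and `1 → 2`, so calling its edge `0 → 2` their composite is well defined. This makes the
vertices and edges of `X` a category: the degenerate `2`-simplices give the unit laws, and the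
faces of the `3`-simplex spanned by three composable edges give associativity. The edges of an
`n`-simplex form a functor `Fin (n + 1) ⥤ C` (its `2`-dimensional faces say that composition is
preserved), i.e. an `n`-simplex of the nerve of `C`, and this map is bijective because simplices
on both sides are determined by their spines.
-/

open CategoryTheory Simplicial SimplexCategory

universe u

namespace SimplexCategory

variable {n : ℕ} {i j k : Fin (n + 1)}

lemma δ_one_comp_mkOfLe (hij : i ≤ j) : δ 1 ≫ mkOfLe i j hij = const ⦋0⦌ ⦋n⦌ i :=
  Hom.ext_zero_left _ _

lemma δ_zero_comp_mkOfLe (hij : i ≤ j) : δ 0 ≫ mkOfLe i j hij = const ⦋0⦌ ⦋n⦌ j :=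
  Hom.ext_zero_left _ _

lemma δ_two_comp_mkOfLeComp (hij : i ≤ j) (hjk : j ≤ k) :
    δ 2 ≫ mkOfLeComp i j k hij hjk = mkOfLe i j hij :=
  Hom.ext_one_left _ _

lemma δ_one_comp_mkOfLeComp (hij : i ≤ j) (hjk : j ≤ k) :
    δ 1 ≫ mkOfLeComp i j k hij hjk = mkOfLe i k (hij.trans hjk) :=
  Hom.ext_one_left _ _

lemma δ_zero_comp_mkOfLeComp (hij : i ≤ j) (hjk : j ≤ k) :
    δ 0 ≫ mkOfLeComp i j k hij hjk = mkOfLe j k hjk :=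
  Hom.ext_one_left _ _

lemma mkOfLe_comp {m : ℕ} (hij : i ≤ j) (α : ⦋n⦌ ⟶ ⦋m⦌) :
    mkOfLe i j hij ≫ α = mkOfLe (α.toOrderHom i) (α.toOrderHom j) (α.toOrderHom.monotone hij) :=
  Hom.ext_one_left _ _

end SimplexCategory

namespace SSet

variable {X Y : SSet.{u}}

lemma spine_app (f : X ⟶ Y) {n : ℕ} (σ : X _⦋n⦌) :
    Y.spine n (f.app _ σ) = (X.spine n σ).map f := by
  ext i
  · exact (NatTrans.naturality_apply f _ σ).symm
  · exact (NatTrans.naturality_apply f _ σ).symm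

def Path.mapEquiv (e : X ≅ Y) (n : ℕ) : Path X n ≃ Path Y n where
  toFun p := p.map e.hom
  invFun p := p.map e.inv
  left_inv p := by ext <;> simp
  right_inv p := by ext <;> simp

lemma IsStrictSegal.of_iso (e : X ≅ Y) [Y.IsStrictSegal] : X.IsStrictSegal where
  segal n := by
    have : X.spine n = (Path.mapEquiv e n).symm ∘ Y.spine n ∘ e.hom.app _ := by
      funext σ
      rw [Function.comp_apply, Function.comp_apply, spine_app]
      exact ((Path.mapEquiv e n).symm_apply_apply _).symm
    rw [this]
    exact (Path.mapEquiv e n).symm.bijective.comp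
      ((IsStrictSegal.segal n).comp ((isIso_iff_bijective _).1 inferInstance))

lemma δ_map_apply {m n : ℕ} (a : Fin (m + 2)) (g : ⦋m + 1⦌ ⟶ ⦋n⦌) (σ : X _⦋n⦌) :
    X.δ a (X.map g.op σ) = X.map (δ a ≫ g).op σ := by
  rw [SimplicialObject.δ, ← Functor.map_comp_apply, ← op_comp]

namespace Edge

variable {n : ℕ}

def ofSimplex (σ : X _⦋n⦌) {i j : Fin (n + 1)} (hij : i ≤ j) :
    Edge ((X.spine n σ).vertex i) ((X.spine n σ).vertex j) :=
  mk (X.map (mkOfLe i j hij).op σ)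
    (by rw [δ_map_apply, δ_one_comp_mkOfLe]; rfl)
    (by rw [δ_map_apply, δ_zero_comp_mkOfLe]; rfl)

def CompStruct.ofSimplex (σ : X _⦋n⦌) {i j k : Fin (n + 1)} (hij : i ≤ j) (hjk : j ≤ k) :
    CompStruct (ofSimplex σ hij) (ofSimplex σ hjk) (ofSimplex σ (hij.trans hjk)) :=
  CompStruct.mk (X.map (mkOfLeComp i j k hij hjk).op σ)
    (by rw [δ_map_apply, δ_two_comp_mkOfLeComp]; rfl)
    (by rw [δ_map_apply, δ_zero_comp_mkOfLeComp]; rfl)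
    (by rw [δ_map_apply, δ_one_comp_mkOfLeComp]; rfl)

section IsStrictSegal

variable [X.IsStrictSegal] {x₀ x₁ x₂ x₃ : X _⦋0⦌}

-- The two `2`-simplices have the same spine, hence coincide.
lemma CompStruct.edge_eq_of_edge_eq {y₀ y₁ y₂ : X _⦋0⦌}
    {e₀₁ : Edge x₀ x₁} {e₁₂ : Edge x₁ x₂} {e₀₂ : Edge x₀ x₂}
    {f₀₁ : Edge y₀ y₁} {f₁₂ : Edge y₁ y₂} {f₀₂ : Edge y₀ y₂}
    (h : CompStruct e₀₁ e₁₂ e₀₂) (h' : CompStruct f₀₁ f₁₂ f₀₂)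
    (h₀₁ : e₀₁.edge = f₀₁.edge) (h₁₂ : e₁₂.edge = f₁₂.edge) : e₀₂.edge = f₀₂.edge := by
  have : h.simplex = h'.simplex := by
    refine (IsStrictSegal.segal 2).injective (Path.ext' fun i => ?_)
    fin_cases i
    · simp [mkOfSucc_zero_eq_δ, ← SimplicialObject.δ_def, h₀₁]
    · simp [mkOfSucc_one_eq_δ, ← SimplicialObject.δ_def, h₁₂]
  rw [← h.d₁, ← h'.d₁, this]

def path₂ (f : Edge x₀ x₁) (g : Edge x₁ x₂) : Path X 2 where
  vertex := ![x₀, x₁, x₂]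
  arrow := ![f.edge, g.edge]
  arrow_src i := by fin_cases i <;> exact src_eq _
  arrow_tgt i := by fin_cases i <;> exact tgt_eq _

def path₃ (f : Edge x₀ x₁) (g : Edge x₁ x₂) (h : Edge x₂ x₃) : Path X 3 where
  vertex := ![x₀, x₁, x₂, x₃]
  arrow := ![f.edge, g.edge, h.edge]
  arrow_src i := by fin_cases i <;> exact src_eq _
  arrow_tgt i := by fin_cases i <;> exact tgt_eq _

noncomputable def comp (f : Edge x₀ x₁) (g : Edge x₁ x₂) : Edge x₀ x₂ :=
  let σ := (StrictSegal.ofIsStrictSegal X).spineToSimplex (path₂ f g)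
  (ofSimplex σ (show (0 : Fin 3) ≤ 2 by decide)).ofEq
    (StrictSegal.spineToSimplex_vertex _ 0 _) (StrictSegal.spineToSimplex_vertex _ 2 _)

noncomputable def compStruct (f : Edge x₀ x₁) (g : Edge x₁ x₂) : CompStruct f g (f.comp g) :=
  let σ := (StrictSegal.ofIsStrictSegal X).spineToSimplex (path₂ f g)
  (CompStruct.ofSimplex σ (show (0 : Fin 3) ≤ 1 by decide) (show (1 : Fin 3) ≤ 2 by decide)).ofEq
    (StrictSegal.spineToSimplex_arrow _ 0 _) (StrictSegal.spineToSimplex_arrow _ 1 _) rfl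

lemma comp_assoc (f : Edge x₀ x₁) (g : Edge x₁ x₂) (h : Edge x₂ x₃) :
    (f.comp g).comp h = f.comp (g.comp h) := by
  let sx := StrictSegal.ofIsStrictSegal X
  let τ := sx.spineToSimplex (path₃ f g h)
  have hf : f.edge = (ofSimplex τ (show (0 : Fin 4) ≤ 1 by decide)).edge :=
    (sx.spineToSimplex_arrow (0 : Fin 3) (path₃ f g h)).symm
  have hg : g.edge = (ofSimplex τ (show (1 : Fin 4) ≤ 2 by decide)).edge :=
    (sx.spineToSimplex_arrow (1 : Fin 3) (path₃ f g h)).symm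
  have hh : h.edge = (ofSimplex τ (show (2 : Fin 4) ≤ 3 by decide)).edge :=
    (sx.spineToSimplex_arrow (2 : Fin 3) (path₃ f g h)).symm
  have hfg := CompStruct.edge_eq_of_edge_eq (compStruct f g) (CompStruct.ofSimplex τ _ _) hf hg
  have hgh := CompStruct.edge_eq_of_edge_eq (compStruct g h) (CompStruct.ofSimplex τ _ _) hg hh
  ext
  rw [CompStruct.edge_eq_of_edge_eq (compStruct _ h) (CompStruct.ofSimplex τ _ _) hfg hh,
    CompStruct.edge_eq_of_edge_eq (compStruct f _) (CompStruct.ofSimplex τ _ _) hf hgh]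

end IsStrictSegal

end Edge

def EdgeCategory (X : SSet.{u}) : Type u := X _⦋0⦌

namespace EdgeCategory

variable [X.IsStrictSegal]

noncomputable instance : Category.{u} (EdgeCategory X) where
  Hom x y := Edge (X := X) x y
  id := Edge.id
  comp := Edge.comp
  id_comp f := Edge.ext (Edge.CompStruct.edge_eq_of_edge_eq
    (Edge.compStruct _ f) (.idComp f) rfl rfl)
  comp_id f := Edge.ext (Edge.CompStruct.edge_eq_of_edge_eq
    (Edge.compStruct f _) (.compId f) rfl rfl)
  assoc := Edge.comp_assoc

lemma hom_eq_of_edge_eq {x y x' y' : EdgeCategory X} (f : x ⟶ y) (g : x' ⟶ y')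
    (hx : x = x') (hy : y = y') (h : Edge.edge f = Edge.edge g) :
    f = eqToHom hx ≫ g ≫ eqToHom hy.symm := by
  subst hx hy
  simpa using Edge.ext h

variable {n : ℕ}

def composableArrows (σ : X _⦋n⦌) : ComposableArrows (EdgeCategory X) n where
  obj i := (X.spine n σ).vertex i
  map φ := Edge.ofSimplex σ (leOfHom φ)
  map_id i := Edge.ext <| by
    change X.map (mkOfLe i i le_rfl).op σ = X.σ 0 (X.map (SimplexCategory.const ⦋0⦌ ⦋n⦌ i).op σ)
    rw [SimplicialObject.σ, ← Functor.map_comp_apply, ← op_comp, mkOfLe_refl]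
    rfl
  map_comp φ ψ := Edge.ext (Edge.CompStruct.edge_eq_of_edge_eq
    (Edge.CompStruct.ofSimplex σ _ _) (Edge.compStruct _ _) rfl rfl)

def path (F : ComposableArrows (EdgeCategory X) n) : Path X n where
  vertex := F.obj
  arrow i := Edge.edge (F.map (homOfLE i.castSucc_le_succ))
  arrow_src _ := Edge.src_eq _
  arrow_tgt _ := Edge.tgt_eq _

lemma path_comp_composableArrows : path ∘ composableArrows (X := X) (n := n) = X.spine n := rfl

lemma path_injective : Function.Injective (path (X := X) (n := n)) := by
  intro F G h
  refine ComposableArrows.ext (fun i => Path.congr_vertex h i) fun i hi => ?_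
  exact hom_eq_of_edge_eq _ _ (Path.congr_vertex h _) (Path.congr_vertex h _)
    (Path.congr_arrow h ⟨i, hi⟩)

lemma composableArrows_bijective :
    Function.Bijective (composableArrows (X := X) (n := n)) := by
  have hcomp : Function.Bijective (path ∘ composableArrows (X := X) (n := n)) :=
    by rw [path_comp_composableArrows]; exact IsStrictSegal.segal n
  exact (Function.Bijective.of_comp_iff' ⟨path_injective, hcomp.surjective.of_comp⟩ _).1 hcomp

lemma composableArrows_map {m : ℕ} (α : ⦋m⦌ ⟶ ⦋n⦌) (σ : X _⦋n⦌) :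
    composableArrows (X.map α.op σ) = (nerve (EdgeCategory X)).map α.op (composableArrows σ) := by
  refine CategoryTheory.Functor.ext (spine_map_vertex X n σ α) fun i j _ =>
    hom_eq_of_edge_eq _ _ (spine_map_vertex X n σ α i) (spine_map_vertex X n σ α j) ?_
  change X.map (mkOfLe i j _).op (X.map α.op σ) = X.map (mkOfLe _ _ _).op σ
  rw [← Functor.map_comp_apply, ← op_comp, mkOfLe_comp]
  rfl

noncomputable def isoNerve : X ≅ nerve (EdgeCategory X) :=
  NatIso.ofComponents
    (fun m => (Equiv.ofBijective _ (composableArrows_bijective (n := m.unop.len))).toIso)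
    fun α => by ext σ; exact composableArrows_map α.unop σ

end EdgeCategory

end SSet

/-- A simplicial set is isomorphic to the nerve of some category if and only if, for
every `n`, the spine map `X _[n] → X _[1] ×_{X _[0]} ⋯ ×_{X _[0]} X _[1]`, sending an
`n`-simplex to its path of `n` consecutive edges, is a bijection.  (Here `SSet.Path X n`
is exactly the set of strings of `n` composable edges of `X`, i.e. the iterated fiber
product.) -/
theorem nerve_iff_spine_bijective (X : SSet.{u}) :
    (∃ (C : Type u) (_ : Category.{u} C), Nonempty (X ≅ nerve C)) ↔
    ∀ n : ℕ, Function.Bijective (X.spine n) := by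
  constructor
  · rintro ⟨C, _, ⟨e⟩⟩
    exact (SSet.IsStrictSegal.of_iso e).segal
  · intro h
    have : X.IsStrictSegal := ⟨h⟩
    exact ⟨_, _, ⟨SSet.EdgeCategory.isoNerve⟩⟩
end

section
/- If C is a simplicial set such that the map C^{Δ[2]} → C^{Λ[2,1]} induced by composition with the horn inclusion Λ[2,1] ↪ Δ[2] is a trivial Kan fibration, then C is a quasi-category. -/
open CategoryTheory Simplicial MonoidalCategory

/-- Simplicial sets form a (cartesian) monoidal closed category; this provides the
internal homs `C^A := (ihom A).obj C`. -/
noncomputable instance : MonoidalClosed SSet.{0} :=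
  inferInstanceAs (MonoidalClosed (SimplexCategoryᵒᵖ ⥤ Type 0))

/-- A map of simplicial sets is a trivial Kan fibration if it has the right lifting
property with respect to all boundary inclusions `∂Δ[n] ⟶ Δ[n]`. -/
def SSet.TrivialKanFibration {X Y : SSet.{0}} (p : X ⟶ Y) : Prop :=
  ∀ n : ℕ, HasLiftingProperty (SSet.boundary n).ι p

/-!
Joyal's retract argument. For an inner horn, `Λ[n, i].ι` is a retract of the pushout-product
`Δ[2] ⊗ Λ[n, i] ∪ Λ[2, 1] ⊗ Δ[n] ⟶ Δ[2] ⊗ Δ[n]` of `Λ[2, 1].ι` and `Λ[n, i].ι`. On vertices the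
retraction is `(0, b) ↦ min b i`, `(1, b) ↦ i`, `(2, b) ↦ max b i` and the section is
`b ↦ (s b, b)` with `s b = 0, 1, 2` according as `b < i`, `b = i`, `b > i`; innerness of `i` is
what makes the retraction send `Λ[2, 1] ⊗ Δ[n]` into the horn. By the tensor-hom adjunction,
`C ⟶ ⊤` lifts against this pushout-product iff `C^Δ[2] ⟶ C^Λ[2, 1]` lifts against `Λ[n, i].ι`,
which a trivial Kan fibration does since horn inclusions are monomorphisms; lifting properties
then pass to the retract.
-/

open MonoidalClosed Limits

universe u

namespace SSet

def prodStdSimplex.homOfOrderHom {p q m : ℕ} (f : Fin (p + 1) × Fin (q + 1) →o Fin (m + 1)) :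
    (Δ[p] ⊗ Δ[q] : SSet.{u}) ⟶ Δ[m] where
  app _ := ↾fun x ↦ stdSimplex.objMk
    (f.comp ((stdSimplex.asOrderHom x.1).prod (stdSimplex.asOrderHom x.2)))

namespace horn

namespace retractUnionProd

variable {n : ℕ} (i : Fin (n + 1))

def rVertex (x : Fin 3 × Fin (n + 1)) : Fin (n + 1) :=
  if x.1 = 0 then min x.2 i else if x.1 = 1 then i else max x.2 i

lemma monotone_rVertex : Monotone (rVertex i) := by
  rintro ⟨a, b⟩ ⟨a', b'⟩ ⟨ha, hb⟩
  grind [rVertex]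

def sVertex (b : Fin (n + 1)) : Fin 3 :=
  if b < i then 0 else if b = i then 1 else 2

lemma monotone_sVertex : Monotone (sVertex i) := by
  grind [Monotone, sVertex]

lemma rVertex_sVertex (b : Fin (n + 1)) : rVertex i (sVertex i b, b) = b := by
  grind [rVertex, sVertex]

lemma rVertex_eq_or_eq (x : Fin 3 × Fin (n + 1)) : rVertex i x = x.2 ∨ rVertex i x = i := by
  grind [rVertex]

lemma le_rVertex (x : Fin 3 × Fin (n + 1)) (hx : x.1 ≠ 0) : i ≤ rVertex i x := by
  grind [rVertex]

lemma rVertex_le (x : Fin 3 × Fin (n + 1)) (hx : x.1 ≠ 2) : rVertex i x ≤ i := by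
  grind [rVertex]

def r : (Δ[2] ⊗ Δ[n] : SSet.{u}) ⟶ Δ[n] :=
  prodStdSimplex.homOfOrderHom ⟨rVertex i, monotone_rVertex i⟩

noncomputable def s : (Δ[n] : SSet.{u}) ⟶ Δ[2] ⊗ Δ[n] :=
  CartesianMonoidalCategory.lift
    (SSet.stdSimplex.map (SimplexCategory.Hom.mk ⟨sVertex i, monotone_sVertex i⟩)) (𝟙 _)

lemma s_r : s.{u} i ≫ r i = 𝟙 _ := by
  ext k x
  obtain ⟨⟨d⟩⟩ := k
  exact stdSimplex.ext _ _ fun j ↦ rVertex_sVertex i (x j)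

lemma range_horn_ι_s_le :
    Subcomplex.range (Λ[n, i].ι ≫ s.{u} i) ≤ Λ[2, 1].unionProd Λ[n, i] := by
  rintro _ _ ⟨x, rfl⟩
  exact (Subcomplex.mem_unionProd_iff _ _ _).2 (Or.inl x.2)

lemma range_unionProd_ι_r_le (h0 : 0 < i) (hn : i < Fin.last n) :
    Subcomplex.range ((Λ[2, 1].unionProd Λ[n, i]).ι ≫ r.{u} i) ≤ Λ[n, i] := by
  rintro ⟨⟨d⟩⟩ _ ⟨⟨⟨a, x⟩, hax⟩, rfl⟩
  replace hax := (Subcomplex.mem_unionProd_iff _ _ _).1 hax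
  simp only [mem_horn_iff_notMem_range] at hax ⊢
  obtain ⟨c, hci, hc⟩ | ⟨c, hc1, hc⟩ := hax
  · refine ⟨c, hci, ?_⟩
    rintro ⟨j, hj⟩
    rcases rVertex_eq_or_eq i (a j, x j) with h | h
    · exact hc ⟨j, h.symm.trans hj⟩
    · exact hci (hj.symm.trans h)
  · fin_cases c
    · refine ⟨0, h0.ne, ?_⟩
      rintro ⟨j, hj⟩
      have h : a j ≠ 0 := fun h ↦ hc ⟨j, h⟩
      exact h0.not_ge (hj ▸ le_rVertex i (a j, x j) h)
    · exact absurd rfl hc1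
    · refine ⟨Fin.last n, hn.ne', ?_⟩
      rintro ⟨j, hj⟩
      have h : a j ≠ 2 := fun h ↦ hc ⟨j, h⟩
      exact hn.not_ge (hj ▸ rVertex_le i (a j, x j) h)

end retractUnionProd

open retractUnionProd in
noncomputable def retractArrowUnionProd {n : ℕ} {i : Fin (n + 1)} (h0 : 0 < i)
    (hn : i < Fin.last n) : RetractArrow Λ[n, i].ι (Λ[2, 1].unionProd.{u} Λ[n, i]).ι where
  i := Arrow.homMk (Subcomplex.lift _ (range_horn_ι_s_le i)) (s i)
  r := Arrow.homMk (Subcomplex.lift _ (range_unionProd_ι_r_le i h0 hn)) (r i)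
  retract := by
    ext : 1
    · simp [← cancel_mono Λ[n, i].ι, s_r]
    · exact s_r i

end horn

lemma TrivialKanFibration.hasLiftingProperty {X Y : SSet.{0}} {p : X ⟶ Y}
    (hp : TrivialKanFibration p) {A B : SSet.{0}} (i : A ⟶ B) [Mono i] :
    HasLiftingProperty i p := by
  have : (MorphismProperty.monomorphisms SSet).rlp p := by
    rw [rlp_monomorphisms]
    rintro _ _ _ ⟨n⟩
    exact hp n
  exact this i (.infer_property _)

-- `C^A` is the pullback-hom of `A.ι` and `q`, since `T^A` and `T^X` are terminal.
lemma hasLiftingProperty_unionProd_ι_iff {X Y C T : SSet.{u}} (A : X.Subcomplex)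
    (B : Y.Subcomplex) (hT : IsTerminal T) (q : C ⟶ T) :
    HasLiftingProperty (A.unionProd B).ι q ↔ HasLiftingProperty B.ι ((pre A.ι).app C) :=
  internalHomAdjunction₂.hasLiftingProperty_iff (Subcomplex.unionProd.pushoutObjObj A B)
    (Functor.PullbackObjObj.ofIsTerminal internalHom A.ι q hT)

end SSet

/-- (Joyal) If `C` is a simplicial set for which the map `C^{Δ[2]} ⟶ C^{Λ[2,1]}`
induced by precomposition with the inner horn inclusion `Λ[2,1] ⟶ Δ[2]` is a trivial
Kan fibration, then `C` is a quasi-category. -/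
theorem quasicategory_of_trivialKanFibration (C : SSet.{0})
    (h : SSet.TrivialKanFibration ((MonoidalClosed.pre (SSet.horn 2 1).ι).app C)) :
    SSet.Quasicategory C := by
  refine SSet.quasicategory_of_hasLiftingProperty C terminalIsTerminal fun {n i} h0 hn ↦ ?_
  have : HasLiftingProperty (Λ[2, 1].unionProd Λ[n, i]).ι (terminalIsTerminal.from C) :=
    (SSet.hasLiftingProperty_unionProd_ι_iff _ _ terminalIsTerminal _).2
      (h.hasLiftingProperty Λ[n, i].ι)
  exact (SSet.horn.retractArrowUnionProd h0 hn).leftLiftingProperty _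
end

section
/- Let C be a category and let A be the type of all morphisms of C (the sigma-type of all hom-sets over all pairs of objects). If C has products of every family of objects indexed by A (i.e., C has limits of shape the discrete category on A), then C is a preorder: for any two objects X and Y there is at most one morphism from X to Y. -/
/-! With `f ≠ g : X ⟶ Y`, the morphisms from `X` into the power of `Y` indexed by the set `M` of
all morphisms of `C` encode every subset of `M` (take `f` on the subset and `g` off it), and each
such morphism is itself an element of `M`. This injects the subsets of `M` into `M`, contradicting
Cantor's theorem. -/

open CategoryTheory CategoryTheory.Limits

namespace CategoryTheory

variable {C : Type*} [Category C]

theorem Limits.Pi.lift_injective {β : Type*} {F : β → C} [HasProduct F] {X : C} :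
    Function.Injective (Pi.lift : (∀ b, X ⟶ F b) → (X ⟶ ∏ᶜ F)) := fun p q hpq => by
  funext b
  simpa using congrArg (· ≫ Pi.π F b) hpq

open Classical in
theorem injective_piLift_ite {ι : Type*} {X Y : C} [HasProduct fun _ : ι => Y] {f g : X ⟶ Y}
    (hfg : f ≠ g) :
    Function.Injective fun s : Set ι => Pi.lift fun i => if i ∈ s then f else g := by
  intro s t hst
  ext i
  have hi := congrFun (Pi.lift_injective hst) i
  by_cases hs : i ∈ s <;> by_cases ht : i ∈ t <;> simp_all [eq_comm]

theorem injective_sigmaHom (X Y : C) :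
    Function.Injective fun h : X ⟶ Y => (⟨X, Y, h⟩ : Σ (X : C) (Y : C), X ⟶ Y) := by
  rintro h h' hh
  cases hh
  rfl

end CategoryTheory

/-- If a category `C` has products of every family indexed by the type of all morphisms
of `C` (the sigma-type of all hom-sets), then `C` is a preorder: any two parallel
morphisms are equal. -/
theorem preorder_of_hasProducts_indexed_by_morphisms
    {C : Type u} [Category.{v} C]
    (h : HasLimitsOfShape (Discrete (Σ (X : C) (Y : C), X ⟶ Y)) C)
    {X Y : C} (f g : X ⟶ Y) : f = g := by
  by_contra hfg
  exact Function.cantor_injective _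
    ((injective_sigmaHom X _).comp (injective_piLift_ite (ι := Σ (X : C) (Y : C), X ⟶ Y) hfg))
end
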